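/- arXiv:0801.2211 — 2 statements merged into one kernel-verified Lean document; each statement's English description precedes it below -/
import Mathlib

section
/- Let φ be a Leibniz 2-cocycle on the twisted Schrödinger-Virasoro algebra with φ(L_{-1},L_1) = φ(L_{-1},Y_1) = φ(L_{-1},M_1) = 0. Then φ(L_1,L_{-1}) = φ(L_1,Y_{-1}) = φ(L_1,M_{-1}) = 0. -/
/-! Evaluating the cocycle identity on triples of basis elements of total degree `0` yields a
small linear system among the values of `φ` on pairs of degree `0`. Solving it first kills
`φ(L₀, L₀)`, `φ(L₀, Y₀)`, `φ(L₀, M₀)` and `φ(Y₀, Y₀)`, and then gives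
`φ(L₁, X₋₁) = -φ(L₋₁, X₁)` for `X = L, Y, M` and every Leibniz 2-cocycle `φ`. -/

abbrev B : Type := ℤ ⊕ ℤ ⊕ ℤ
abbrev V : Type := B →₀ ℂ

noncomputable def Lg (n : ℤ) : V := Finsupp.single (Sum.inl n) 1
noncomputable def Yg (n : ℤ) : V := Finsupp.single (Sum.inr (Sum.inl n)) 1
noncomputable def Mg (n : ℤ) : V := Finsupp.single (Sum.inr (Sum.inr n)) 1

/-- Bracket on basis elements of the twisted Schrödinger–Virasoro algebra. -/
noncomputable def brB : B → B → V
  | Sum.inl n, Sum.inl m => ((m : ℂ) - n) • Lg (n + m)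
  | Sum.inl n, Sum.inr (Sum.inl m) => ((m : ℂ) - n / 2) • Yg (n + m)
  | Sum.inl n, Sum.inr (Sum.inr p) => (p : ℂ) • Mg (n + p)
  | Sum.inr (Sum.inl m), Sum.inl n => -(((m : ℂ) - n / 2) • Yg (n + m))
  | Sum.inr (Sum.inr p), Sum.inl n => -((p : ℂ) • Mg (n + p))
  | Sum.inr (Sum.inl m), Sum.inr (Sum.inl m') => ((m' : ℂ) - m) • Mg (m + m')
  | _, _ => 0

/-- The bilinear extension of the bracket to the whole space. -/
noncomputable def bk : V →ₗ[ℂ] V →ₗ[ℂ] V :=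
  Finsupp.lsum ℂ fun a => LinearMap.toSpanSingleton ℂ (V →ₗ[ℂ] V)
    (Finsupp.lsum ℂ fun b => LinearMap.toSpanSingleton ℂ V (brB a b))

/-- `φ` is a Leibniz 2-cocycle on the twisted Schrödinger–Virasoro algebra. -/
def IsLeibnizCocycle (φ : V →ₗ[ℂ] V →ₗ[ℂ] ℂ) : Prop :=
  ∀ x y z : V, φ x (bk y z) = φ (bk x y) z - φ (bk x z) y

lemma bk_single (a b : B) : bk (Finsupp.single a 1) (Finsupp.single b 1) = brB a b := by
  simp [bk, Finsupp.lsum_single]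

@[simp] lemma bk_Lg_Lg (n m : ℤ) : bk (Lg n) (Lg m) = ((m : ℂ) - n) • Lg (n + m) := bk_single _ _
@[simp] lemma bk_Lg_Yg (n m : ℤ) : bk (Lg n) (Yg m) = ((m : ℂ) - n / 2) • Yg (n + m) :=
  bk_single _ _
@[simp] lemma bk_Lg_Mg (n p : ℤ) : bk (Lg n) (Mg p) = (p : ℂ) • Mg (n + p) := bk_single _ _
@[simp] lemma bk_Yg_Lg (m n : ℤ) : bk (Yg m) (Lg n) = -(((m : ℂ) - n / 2) • Yg (n + m)) :=
  bk_single _ _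
@[simp] lemma bk_Mg_Lg (p n : ℤ) : bk (Mg p) (Lg n) = -((p : ℂ) • Mg (n + p)) := bk_single _ _
@[simp] lemma bk_Yg_Yg (m m' : ℤ) : bk (Yg m) (Yg m') = ((m' : ℂ) - m) • Mg (m + m') :=
  bk_single _ _

namespace IsLeibnizCocycle

variable {φ : V →ₗ[ℂ] V →ₗ[ℂ] ℂ} (hco : IsLeibnizCocycle φ)
include hco

theorem apply_Lg_zero_Lg_zero : φ (Lg 0) (Lg 0) = 0 := by
  have e := hco (Lg (-1)) (Lg 1) (Lg 0)
  norm_num at e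
  linear_combination -e / 2

theorem apply_Lg_one_Lg_neg_one : φ (Lg 1) (Lg (-1)) = -φ (Lg (-1)) (Lg 1) := by
  have e := hco (Lg 0) (Lg 1) (Lg (-1))
  norm_num at e
  linear_combination -e - 2 * hco.apply_Lg_zero_Lg_zero

theorem apply_Yg_zero_Lg_zero : φ (Yg 0) (Lg 0) = 0 := by
  have e := hco (Lg (-1)) (Yg 1) (Lg 0)
  norm_num at e
  linear_combination -(2 / 3 : ℂ) * e

theorem apply_Lg_zero_Yg_zero : φ (Lg 0) (Yg 0) = 0 := by
  have e₁ := hco (Lg (-1)) (Yg 0) (Lg 1)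
  have e₂ := hco (Lg 0) (Yg 1) (Lg (-1))
  have e₃ := hco (Yg 0) (Lg 1) (Lg (-1))
  norm_num at e₁ e₂ e₃
  linear_combination (4 / 5 : ℂ) * e₁ + (2 / 5 : ℂ) * e₂ - (4 / 5 : ℂ) * e₃
    - (8 / 5 : ℂ) * hco.apply_Yg_zero_Lg_zero

theorem apply_Lg_one_Yg_neg_one : φ (Lg 1) (Yg (-1)) = -φ (Lg (-1)) (Yg 1) := by
  have e₁ := hco (Lg (-1)) (Yg 0) (Lg 1)
  have e₂ := hco (Lg 0) (Lg 1) (Yg (-1))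
  norm_num at e₁ e₂
  linear_combination -e₂ + 2 * e₁ - (11 / 2 : ℂ) * hco.apply_Lg_zero_Yg_zero

theorem apply_Lg_zero_Mg_zero : φ (Lg 0) (Mg 0) = 0 := by
  simpa using hco (Lg (-1)) (Mg 0) (Lg 1)

theorem apply_Mg_one_Lg_neg_one : φ (Mg 1) (Lg (-1)) = -φ (Lg (-1)) (Mg 1) := by
  have e := hco (Lg 0) (Mg 1) (Lg (-1))
  norm_num at e
  linear_combination -e - hco.apply_Lg_zero_Mg_zero

theorem apply_Yg_zero_Yg_zero : φ (Yg 0) (Yg 0) = 0 := by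
  have e₁ := hco (Lg (-1)) (Yg 0) (Yg 1)
  have e₂ := hco (Yg 0) (Yg 1) (Lg (-1))
  norm_num at e₁ e₂
  linear_combination (1 / 3 : ℂ) * (e₁ - e₂ - hco.apply_Mg_one_Lg_neg_one)

theorem apply_Yg_one_Yg_neg_one : φ (Yg 1) (Yg (-1)) = -2 * φ (Lg (-1)) (Mg 1) := by
  have e := hco (Yg 1) (Lg (-1)) (Yg 0)
  norm_num at e
  linear_combination 2 * e - 3 * hco.apply_Yg_zero_Yg_zero + 2 * hco.apply_Mg_one_Lg_neg_one

theorem apply_Lg_one_Mg_neg_one : φ (Lg 1) (Mg (-1)) = -φ (Lg (-1)) (Mg 1) := by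
  have e := hco (Lg 1) (Yg 0) (Yg (-1))
  norm_num at e
  linear_combination -e + (1 / 2 : ℂ) * hco.apply_Yg_one_Yg_neg_one
    - (3 / 2 : ℂ) * hco.apply_Yg_zero_Yg_zero

end IsLeibnizCocycle

theorem stmt5 (φ : V →ₗ[ℂ] V →ₗ[ℂ] ℂ) (hco : IsLeibnizCocycle φ)
    (h1 : φ (Lg (-1)) (Lg 1) = 0) (h2 : φ (Lg (-1)) (Yg 1) = 0)
    (h3 : φ (Lg (-1)) (Mg 1) = 0) :
    φ (Lg 1) (Lg (-1)) = 0 ∧ φ (Lg 1) (Yg (-1)) = 0 ∧ φ (Lg 1) (Mg (-1)) = 0 := by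
  refine ⟨?_, ?_, ?_⟩
  · rw [hco.apply_Lg_one_Lg_neg_one, h1, neg_zero]
  · rw [hco.apply_Lg_one_Yg_neg_one, h2, neg_zero]
  · rw [hco.apply_Lg_one_Mg_neg_one, h3, neg_zero]
end

section
/- Let φ be a Leibniz 2-cocycle on the twisted Schrödinger-Virasoro algebra with φ(L_0, Y_n) = φ(Y_n, L_0) = 0 for all n. Then for every n ≠ 0: φ(L_{−n}, Y_n) = φ(Y_{−n}, L_n) − 3φ(L_0, Y_0) and φ(L_{−n}, Y_n) = −φ(Y_n, L_{−n}) − (3/2)φ(L_0, Y_0). -/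
lemma bk_LL (a b : ℤ) : bk (Lg a) (Lg b) = ((b : ℂ) - a) • Lg (a + b) := by
  rw [Lg, Lg, bk_single]; rfl

lemma bk_LY (a c : ℤ) : bk (Lg a) (Yg c) = ((c : ℂ) - a / 2) • Yg (a + c) := by
  rw [Lg, Yg, bk_single]; rfl

lemma bk_YL (c a : ℤ) : bk (Yg c) (Lg a) = -(((c : ℂ) - a / 2) • Yg (a + c)) := by
  rw [Yg, Lg, bk_single]; rfl

theorem stmt15 (φ : V →ₗ[ℂ] V →ₗ[ℂ] ℂ) (hco : IsLeibnizCocycle φ)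
    (h1 : ∀ n : ℤ, φ (Lg 0) (Yg n) = 0) (h2 : ∀ n : ℤ, φ (Yg n) (Lg 0) = 0) :
    ∀ n : ℤ, n ≠ 0 →
      φ (Lg (-n)) (Yg n) = φ (Yg (-n)) (Lg n) - 3 * φ (Lg 0) (Yg 0) ∧
      φ (Lg (-n)) (Yg n) = - φ (Yg n) (Lg (-n)) - (3 / 2) * φ (Lg 0) (Yg 0) := by
  intro n hn
  have hn' : (n : ℂ) ≠ 0 := Int.cast_ne_zero.mpr hn
  have h10 := h1 0
  have e1 := hco (Lg 0) (Lg (-n)) (Yg n)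
  rw [bk_LY, bk_LL, bk_LY] at e1
  simp only [map_smul, LinearMap.smul_apply, smul_eq_mul, Int.cast_neg, neg_add_cancel,
    add_zero, zero_add, Int.cast_zero, sub_zero] at e1
  rw [h10] at e1
  -- e1 : (n - (-n)/2) * 0 = (−n − 0) * φ (Lg 0 + ...) ...
  have e2 := hco (Lg (-n)) (Lg n) (Yg 0)
  rw [bk_LY, bk_LL, bk_LY] at e2
  simp only [map_smul, LinearMap.smul_apply, smul_eq_mul, Int.cast_neg, neg_add_cancel,
    add_zero, zero_add, Int.cast_zero, sub_zero] at e2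
  rw [h10] at e2
  constructor
  · refine mul_left_cancel₀ hn' ?_
    rw [h10]
    linear_combination (-2 : ℂ) * e2
  · refine mul_left_cancel₀ hn' ?_
    rw [h10]
    linear_combination e1
end
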